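/- (Predictable-degree property for products of three polynomial matrices.) Let F be a field and P = L E R, where L ∈ F[λ]^{m×r}, E ∈ F[λ]^{r×s} with entries e_{ij}, and R ∈ F[λ]^{s×n}. If L is column reduced and R is row reduced, then deg(P) = max_{1 ≤ i ≤ r, 1 ≤ j ≤ s} ( deg(L_{*i}) + deg(e_{ij}) + deg(R_{j*}) ), with the convention that the degree of the zero polynomial is −∞ and −∞ is absorbing under addition. -/

import Mathlib

/-!
Each entry of `L E R` is a sum of products `L_{ki} e_{ij} R_{jl}`, of degree at most
`deg L_{*i} + deg e_{ij} + deg R_{j*}`, which gives `≤`. If `d` is the maximum of these bounds,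
the coefficient of `λ^d` in `L E R` is `L_hc M R_hr`, where `M` keeps the leading coefficients of
the `e_{ij}` whose bound is exactly `d`. Since `M ≠ 0`, `L_hc` is injective and `R_hrᵀ` is
injective, this coefficient matrix is nonzero, which gives `≥`.
-/

open Polynomial Matrix

noncomputable section

variable {F : Type*} [Field F]

/-- The matrix over the field of rational functions associated with a polynomial matrix. -/
def toRat {m n : ℕ} (P : Matrix (Fin m) (Fin n) F[X]) : Matrix (Fin m) (Fin n) (RatFunc F) :=
  P.map (algebraMap F[X] (RatFunc F))

/-- The normal rank of a polynomial matrix: its rank over the field of rational functions. -/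
def normalRank {m n : ℕ} (P : Matrix (Fin m) (Fin n) F[X]) : ℕ := (toRat P).rank

/-- The degree of a polynomial matrix: the maximum of the degrees of its entries,
`⊥` (i.e. -∞) for the zero matrix. -/
def matDeg {m n : ℕ} (P : Matrix (Fin m) (Fin n) F[X]) : WithBot ℕ :=
  Finset.univ.sup fun i : Fin m => Finset.univ.sup fun j : Fin n => (P i j).degree

/-- Degree of the i-th row. -/
def rowDeg {m n : ℕ} (P : Matrix (Fin m) (Fin n) F[X]) (i : Fin m) : WithBot ℕ :=
  Finset.univ.sup fun j : Fin n => (P i j).degree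

/-- Degree of the j-th column. -/
def colDeg {m n : ℕ} (P : Matrix (Fin m) (Fin n) F[X]) (j : Fin n) : WithBot ℕ :=
  Finset.univ.sup fun i : Fin m => (P i j).degree

/-- Degree of the i-th row as a natural number (0 for a zero row). -/
def rowDegNat {m n : ℕ} (P : Matrix (Fin m) (Fin n) F[X]) (i : Fin m) : ℕ :=
  Finset.univ.sup fun j : Fin n => (P i j).natDegree

/-- Degree of the j-th column as a natural number (0 for a zero column). -/
def colDegNat {m n : ℕ} (P : Matrix (Fin m) (Fin n) F[X]) (j : Fin n) : ℕ :=
  Finset.univ.sup fun i : Fin m => (P i j).natDegree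

/-- Highest-row-degree coefficient matrix. -/
def hrMatrix {m n : ℕ} (P : Matrix (Fin m) (Fin n) F[X]) : Matrix (Fin m) (Fin n) F :=
  Matrix.of fun i j => (P i j).coeff (rowDegNat P i)

/-- Highest-column-degree coefficient matrix. -/
def hcMatrix {m n : ℕ} (P : Matrix (Fin m) (Fin n) F[X]) : Matrix (Fin m) (Fin n) F :=
  Matrix.of fun i j => (P i j).coeff (colDegNat P j)

/-- A polynomial matrix is row reduced if its highest-row-degree coefficient matrix has
full row rank. -/
def RowReduced {m n : ℕ} (P : Matrix (Fin m) (Fin n) F[X]) : Prop := (hrMatrix P).rank = m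

/-- A polynomial matrix is column reduced if its highest-column-degree coefficient matrix has
full column rank. -/
def ColReduced {m n : ℕ} (P : Matrix (Fin m) (Fin n) F[X]) : Prop := (hcMatrix P).rank = n

/-- Evaluation of a polynomial matrix at a point of the algebraic closure. -/
def evalMat {m n : ℕ} (P : Matrix (Fin m) (Fin n) F[X]) (x : AlgebraicClosure F) :
    Matrix (Fin m) (Fin n) (AlgebraicClosure F) :=
  Matrix.of fun i j => aeval x (P i j)

/-- The rows of `P` form a minimal basis of the rational subspace they span (Forney's
characterization): full row rank at every point of the algebraic closure, and row reduced. -/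
def IsMinimalRowBasis {m n : ℕ} (P : Matrix (Fin m) (Fin n) F[X]) : Prop :=
  (∀ x : AlgebraicClosure F, (evalMat P x).rank = m) ∧ RowReduced P

/-- The columns of `P` form a minimal basis of the rational subspace they span. -/
def IsMinimalColBasis {m n : ℕ} (P : Matrix (Fin m) (Fin n) F[X]) : Prop :=
  (∀ x : AlgebraicClosure F, (evalMat P x).rank = n) ∧ ColReduced P

/-- The column space Col(P) over the field of rational functions. -/
def colSpace {m n : ℕ} (P : Matrix (Fin m) (Fin n) F[X]) :
    Submodule (RatFunc F) (Fin m → RatFunc F) :=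
  LinearMap.range (toRat P).mulVecLin

/-- The row space Row(P) over the field of rational functions. -/
def rowSpace {m n : ℕ} (P : Matrix (Fin m) (Fin n) F[X]) :
    Submodule (RatFunc F) (Fin n → RatFunc F) :=
  LinearMap.range (toRat P)ᵀ.mulVecLin

/-- The right nullspace N_r(P). -/
def rightNull {m n : ℕ} (P : Matrix (Fin m) (Fin n) F[X]) :
    Submodule (RatFunc F) (Fin n → RatFunc F) :=
  LinearMap.ker (toRat P).mulVecLin

/-- The left nullspace N_ℓ(P). -/
def leftNull {m n : ℕ} (P : Matrix (Fin m) (Fin n) F[X]) :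
    Submodule (RatFunc F) (Fin m → RatFunc F) :=
  LinearMap.ker (toRat P)ᵀ.mulVecLin

theorem Polynomial.sup_degree_eq_coe_sup_natDegree {R ι : Type*} [Semiring R] {s : Finset ι}
    {f : ι → R[X]} (h : s.sup (fun i => (f i).degree) ≠ ⊥) :
    s.sup (fun i => (f i).degree) = ↑(s.sup fun i => (f i).natDegree) := by
  have hmono : Monotone (WithBot.unbotD (0 : ℕ)) := by
    intro x y hxy
    cases x <;> cases y <;> simp_all
  obtain ⟨D, hD⟩ := WithBot.ne_bot_iff_exists.mp h
  have hunbot := Finset.apply_sup_eq_sup_comp_of_linearOrder (s := s)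
    (f := fun i => (f i).degree) _ hmono rfl
  rw [← hD, WithBot.unbotD_coe] at hunbot
  rw [← hD, hunbot]
  rfl

theorem Matrix.eq_zero_of_mul_eq_zero_of_rank_eq_card {K l m n : Type*} [Field K]
    [Fintype m] {A : Matrix l m K} {B : Matrix m n K} (hA : A.rank = Fintype.card m)
    (hAB : A * B = 0) : B = 0 := by
  have hker : LinearMap.ker A.mulVecLin = ⊥ := by
    have := LinearMap.finrank_range_add_finrank_ker A.mulVecLin
    rw [← Matrix.rank, hA, Module.finrank_fintype_fun_eq_card] at this
    exact Submodule.finrank_eq_zero.mp (by omega)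
  ext i j
  have hcol : A *ᵥ (fun i => B i j) = 0 := funext fun k => congrFun (congrFun hAB k) j
  exact congrFun (Matrix.ker_mulVecLin_eq_bot_iff.mp hker _ hcol) i

theorem Matrix.mul_mul_ne_zero_of_rank_eq_card {K l m n o : Type*} [Field K]
    [Fintype m] [Fintype n] [Fintype o] {A : Matrix l m K} {M : Matrix m n K} {B : Matrix n o K}
    (hA : A.rank = Fintype.card m) (hB : B.rank = Fintype.card n) (hM : M ≠ 0) :
    A * M * B ≠ 0 := by
  intro hAMB
  have hMB : M * B = 0 := eq_zero_of_mul_eq_zero_of_rank_eq_card hA (by rwa [← Matrix.mul_assoc])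
  have hBM : Bᵀ * Mᵀ = 0 := by rw [← Matrix.transpose_mul, hMB, Matrix.transpose_zero]
  exact hM (Matrix.transpose_eq_zero.mp
    (eq_zero_of_mul_eq_zero_of_rank_eq_card (by rwa [Matrix.rank_transpose]) hBM))

section PredictableDegree

variable {m r s n : ℕ}

theorem degree_le_colDeg (P : Matrix (Fin m) (Fin n) F[X]) (i : Fin m) (j : Fin n) :
    (P i j).degree ≤ colDeg P j :=
  Finset.le_sup (f := fun i => (P i j).degree) (Finset.mem_univ i)

theorem degree_le_rowDeg (P : Matrix (Fin m) (Fin n) F[X]) (i : Fin m) (j : Fin n) :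
    (P i j).degree ≤ rowDeg P i :=
  Finset.le_sup (f := fun j => (P i j).degree) (Finset.mem_univ j)

theorem natDegree_le_colDegNat (P : Matrix (Fin m) (Fin n) F[X]) (i : Fin m) (j : Fin n) :
    (P i j).natDegree ≤ colDegNat P j :=
  Finset.le_sup (f := fun i => (P i j).natDegree) (Finset.mem_univ i)

theorem natDegree_le_rowDegNat (P : Matrix (Fin m) (Fin n) F[X]) (i : Fin m) (j : Fin n) :
    (P i j).natDegree ≤ rowDegNat P i :=
  Finset.le_sup (f := fun j => (P i j).natDegree) (Finset.mem_univ j)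

theorem le_matDeg_of_coeff_ne_zero {P : Matrix (Fin m) (Fin n) F[X]} {i : Fin m} {j : Fin n}
    {d : ℕ} (h : (P i j).coeff d ≠ 0) : (d : WithBot ℕ) ≤ matDeg P :=
  (le_degree_of_ne_zero h).trans <| (degree_le_rowDeg P i j).trans <|
    Finset.le_sup (f := rowDeg P) (Finset.mem_univ i)

variable (L : Matrix (Fin m) (Fin r) F[X]) (E : Matrix (Fin r) (Fin s) F[X])
  (R : Matrix (Fin s) (Fin n) F[X])

def termDeg (i : Fin r) (j : Fin s) : WithBot ℕ := colDeg L i + (E i j).degree + rowDeg R j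

def predictedDeg : WithBot ℕ :=
  Finset.univ.sup fun i => Finset.univ.sup fun j => termDeg L E R i j

def leadingPart (d : ℕ) : Matrix (Fin r) (Fin s) F :=
  Matrix.of fun i j => if termDeg L E R i j = d then (E i j).leadingCoeff else 0

theorem mul_mul_apply_eq_sum (k : Fin m) (l : Fin n) :
    (L * E * R) k l = ∑ j, ∑ i, L k i * E i j * R j l := by
  simp only [Matrix.mul_apply, Finset.sum_mul]

theorem termDeg_le_predictedDeg (i : Fin r) (j : Fin s) :
    termDeg L E R i j ≤ predictedDeg L E R :=
  (Finset.le_sup (f := fun j => termDeg L E R i j) (Finset.mem_univ j)).trans <|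
    Finset.le_sup (f := fun i => Finset.univ.sup fun j => termDeg L E R i j) (Finset.mem_univ i)

theorem degree_term_le_termDeg (k : Fin m) (l : Fin n) (i : Fin r) (j : Fin s) :
    (L k i * E i j * R j l).degree ≤ termDeg L E R i j :=
  (degree_mul_le _ _).trans <| add_le_add ((degree_mul_le _ _).trans
    (add_le_add_left (degree_le_colDeg L k i) _)) (degree_le_rowDeg R j l)

theorem matDeg_mul_mul_le : matDeg (L * E * R) ≤ predictedDeg L E R := by
  refine Finset.sup_le fun k _ => Finset.sup_le fun l _ => ?_
  rw [mul_mul_apply_eq_sum]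
  refine (degree_sum_le _ _).trans (Finset.sup_le fun j _ => ?_)
  refine (degree_sum_le _ _).trans (Finset.sup_le fun i _ => ?_)
  exact (degree_term_le_termDeg L E R k l i j).trans (termDeg_le_predictedDeg L E R i j)

theorem coeff_term_colDegNat_add_natDegree_add_rowDegNat (k : Fin m) (l : Fin n) (i : Fin r)
    (j : Fin s) :
    (L k i * E i j * R j l).coeff (colDegNat L i + (E i j).natDegree + rowDegNat R j) =
      hcMatrix L k i * (E i j).leadingCoeff * hrMatrix R j l := by
  rw [coeff_mul_add_eq_of_natDegree_le (natDegree_mul_le.trans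
      (add_le_add_left (natDegree_le_colDegNat L k i) _)) (natDegree_le_rowDegNat R j l),
    coeff_mul_add_eq_of_natDegree_le (natDegree_le_colDegNat L k i) le_rfl]
  rfl

theorem coeff_term_eq_of_termDeg_le {d : ℕ} {k : Fin m} {l : Fin n} {i : Fin r} {j : Fin s}
    (hd : termDeg L E R i j ≤ d) :
    (L k i * E i j * R j l).coeff d =
      hcMatrix L k i * leadingPart L E R d i j * hrMatrix R j l := by
  by_cases hij : termDeg L E R i j = d
  · obtain ⟨⟨hL, hE⟩, hR⟩ :
        (colDeg L i ≠ ⊥ ∧ (E i j).degree ≠ ⊥) ∧ rowDeg R j ≠ ⊥ := by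
      have hne : termDeg L E R i j ≠ ⊥ := hij ▸ WithBot.coe_ne_bot
      simpa only [termDeg, WithBot.add_ne_bot] using hne
    have hsum : colDegNat L i + (E i j).natDegree + rowDegNat R j = d := by
      rw [termDeg, colDeg, rowDeg, sup_degree_eq_coe_sup_natDegree hL,
        sup_degree_eq_coe_sup_natDegree hR, degree_eq_natDegree (degree_ne_bot.mp hE)] at hij
      exact_mod_cast hij
    rw [← hsum, coeff_term_colDegNat_add_natDegree_add_rowDegNat, hsum]
    simp [leadingPart, hij]
  · rw [coeff_eq_zero_of_degree_lt ((degree_term_le_termDeg L E R k l i j).trans_lt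
      (lt_of_le_of_ne hd hij))]
    simp [leadingPart, hij]

theorem coeff_mul_mul_eq {d : ℕ} (hd : predictedDeg L E R ≤ d) (k : Fin m) (l : Fin n) :
    ((L * E * R) k l).coeff d = (hcMatrix L * leadingPart L E R d * hrMatrix R) k l := by
  rw [mul_mul_apply_eq_sum]
  simp only [finsetSum_coeff, Matrix.mul_apply, Finset.sum_mul]
  exact Finset.sum_congr rfl fun j _ => Finset.sum_congr rfl fun i _ =>
    coeff_term_eq_of_termDeg_le L E R ((termDeg_le_predictedDeg L E R i j).trans hd)

theorem leadingPart_ne_zero {d : ℕ} (hd : predictedDeg L E R = d) :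
    leadingPart L E R d ≠ 0 := by
  replace hd : Finset.univ.sup (fun p : Fin r × Fin s => termDeg L E R p.1 p.2) = d := by
    rw [← Finset.univ_product_univ, Finset.sup_product_left]
    exact hd
  have hne : (Finset.univ : Finset (Fin r × Fin s)).Nonempty :=
    Finset.nonempty_iff_ne_empty.mpr fun h => by simp [h] at hd
  obtain ⟨⟨i, j⟩, -, hij⟩ := Finset.exists_mem_eq_sup _ hne fun p => termDeg L E R p.1 p.2
  rw [hd] at hij
  have hE : E i j ≠ 0 := by
    rintro hE
    simp [termDeg, hE] at hij
  intro h
  simpa [leadingPart, ← hij, hE] using congrFun (congrFun h i) j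

end PredictableDegree

/-- Predictable-degree property for a product of three polynomial matrices: if L is column
reduced and R is row reduced, then
deg(L E R) = max over i, j of (deg L_{*i} + deg e_{ij} + deg R_{j*}). -/
theorem predictable_degree_three_factors
    {F : Type*} [Field F] {m r s n : ℕ}
    (L : Matrix (Fin m) (Fin r) F[X]) (E : Matrix (Fin r) (Fin s) F[X])
    (R : Matrix (Fin s) (Fin n) F[X])
    (hL : ColReduced L) (hR : RowReduced R) :
    matDeg (L * E * R) =
      Finset.univ.sup (fun i : Fin r =>
        Finset.univ.sup (fun j : Fin s => colDeg L i + (E i j).degree + rowDeg R j)) := by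
  change matDeg (L * E * R) = predictedDeg L E R
  refine le_antisymm (matDeg_mul_mul_le L E R) ?_
  obtain hbot | hne := eq_or_ne (predictedDeg L E R) ⊥
  · exact hbot ▸ bot_le
  obtain ⟨d, hd⟩ := WithBot.ne_bot_iff_exists.mp hne
  have hC : hcMatrix L * leadingPart L E R d * hrMatrix R ≠ 0 :=
    Matrix.mul_mul_ne_zero_of_rank_eq_card (by rw [Fintype.card_fin]; exact hL)
      (by rw [Fintype.card_fin]; exact hR) (leadingPart_ne_zero L E R hd.symm)
  obtain ⟨k, l, hkl⟩ : ∃ k l, (hcMatrix L * leadingPart L E R d * hrMatrix R) k l ≠ 0 := by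
    by_contra! h
    exact hC (Matrix.ext h)
  rw [← hd]
  exact le_matDeg_of_coeff_ne_zero (i := k) (j := l)
    ((coeff_mul_mul_eq L E R hd.ge k l).symm ▸ hkl)
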